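/- In the group QTr_n (generated by R_{ij} for distinct i,j in [n] with relations R_{ij}R_{ik}R_{jk} = R_{jk}R_{ik}R_{ij} for distinct i,j,k and R_{ij}R_{kl} = R_{kl}R_{ij} for distinct i,j,k,l), the map R_{ij} -> R_{ij} for all i,j followed by the inclusion sending R_{ij} (i<j only) into QTr_n yields a split surjection QTr_n -> Tr_n; i.e., Tr_n is a retract of QTr_n. -/

import Mathlib

/-- Index type for generators `R_{ij}`, `i ≠ j`. -/
def PairNe (n : ℕ) := {p : Fin n × Fin n // p.1 ≠ p.2}

/-- The generator `R_{ij}` in the free group. -/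
def fgen {n : ℕ} (i j : Fin n) (h : i ≠ j) : FreeGroup (PairNe n) :=
  FreeGroup.of ⟨(i, j), h⟩

/-- Relations of `QTr_n`: the quantum Yang–Baxter relations
`R_{ij}R_{ik}R_{jk} = R_{jk}R_{ik}R_{ij}` for distinct `i,j,k`, and commutation
`R_{ij}R_{kl} = R_{kl}R_{ij}` for distinct `i,j,k,l`. -/
def qtrRels (n : ℕ) : Set (FreeGroup (PairNe n)) :=
  {w | (∃ (i j k : Fin n) (hij : i ≠ j) (hik : i ≠ k) (hjk : j ≠ k),
          w = fgen i j hij * fgen i k hik * fgen j k hjk *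
              (fgen j k hjk * fgen i k hik * fgen i j hij)⁻¹) ∨
       (∃ (i j k l : Fin n) (hij : i ≠ j) (hkl : k ≠ l),
          i ≠ k ∧ i ≠ l ∧ j ≠ k ∧ j ≠ l ∧
          w = fgen i j hij * fgen k l hkl * (fgen k l hkl * fgen i j hij)⁻¹)}

/-- Relations of `Tr_n`: those of `QTr_n` together with `R_{ij} R_{ji} = 1`. -/
def trRels (n : ℕ) : Set (FreeGroup (PairNe n)) :=
  qtrRels n ∪ {w | ∃ (i j : Fin n) (hij : i ≠ j), w = fgen i j hij * fgen j i hij.symm}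

/-- The quasitriangular group `QTr_n`. -/
abbrev QTrGroup (n : ℕ) := PresentedGroup (qtrRels n)

/-- The triangular group `Tr_n`. -/
abbrev TrGroup (n : ℕ) := PresentedGroup (trRels n)

/-- The generator `R_{ij}` of `QTr_n`. -/
def QTrGen {n : ℕ} (i j : Fin n) (h : i ≠ j) : QTrGroup n := PresentedGroup.of ⟨(i, j), h⟩

/-- The generator `R_{ij}` of `Tr_n`. -/
def TrGen {n : ℕ} (i j : Fin n) (h : i ≠ j) : TrGroup n := PresentedGroup.of ⟨(i, j), h⟩

/-!
The homomorphism `f` is well defined because the oriented generators `S_{ij}` (`R_{ij}` for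
`i < j`, `R_{ji}⁻¹` for `j < i`) satisfy all defining relations of `Tr_n`. Indeed
`S_{ji} = S_{ij}⁻¹` by construction, commutation survives inverting either factor, and the
Yang–Baxter relation `x y z = z y x` for `(S_{ij}, S_{ik}, S_{jk})` is preserved by
transposing `i, j` or `j, k` (it becomes `x⁻¹ z y = y z x⁻¹`, resp. `y x z⁻¹ = z⁻¹ x y`), so it
reduces to the case `i < j < k`, a relation of `QTr_n`. Finally `g ∘ f` fixes `R_{ij}` for
`i < j` and sends `R_{ij}` for `j < i` to `R_{ji}⁻¹`, which equals `R_{ij}` in `Tr_n`.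
-/

theorem distinct_triple_of_lt_of_swaps {α : Type*} [LinearOrder α] {P : α → α → α → Prop}
    (lt : ∀ a b c, a < b → b < c → P a b c)
    (swap₁₂ : ∀ a b c, P a b c → P b a c) (swap₂₃ : ∀ a b c, P a b c → P a c b)
    {a b c : α} (hab : a ≠ b) (hac : a ≠ c) (hbc : b ≠ c) : P a b c := by
  rcases hab.lt_or_gt with hab | hab <;> rcases hac.lt_or_gt with hac | hac <;>
    rcases hbc.lt_or_gt with hbc | hbc
  · exact lt a b c hab hbc
  · exact swap₂₃ _ _ _ (lt a c b hac hbc)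
  · exact absurd (hab.trans hbc) hac.not_gt
  · exact swap₂₃ _ _ _ (swap₁₂ _ _ _ (lt c a b hac hab))
  · exact swap₁₂ _ _ _ (lt b a c hab hac)
  · exact absurd (hac.trans hbc) hab.not_gt
  · exact swap₁₂ _ _ _ (swap₂₃ _ _ _ (lt b c a hbc hac))
  · exact swap₁₂ _ _ _ (swap₂₃ _ _ _ (swap₁₂ _ _ _ (lt c b a hbc hab)))

section YangBaxter

variable {G : Type*} [Group G] {x y z : G}

theorem yangBaxter_swap₁₂ (h : x * y * z = z * y * x) : x⁻¹ * z * y = y * z * x⁻¹ :=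
  calc x⁻¹ * z * y = x⁻¹ * (z * y * x) * x⁻¹ := by group
    _ = x⁻¹ * (x * y * z) * x⁻¹ := by rw [h]
    _ = y * z * x⁻¹ := by group

theorem yangBaxter_swap₂₃ (h : x * y * z = z * y * x) : y * x * z⁻¹ = z⁻¹ * x * y :=
  calc y * x * z⁻¹ = z⁻¹ * (z * y * x) * z⁻¹ := by group
    _ = z⁻¹ * (x * y * z) * z⁻¹ := by rw [h]
    _ = z⁻¹ * x * y := by group

end YangBaxter

namespace PresentedGroup

variable {α : Type*} {rels₁ rels₂ : Set (FreeGroup α)}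

def homOfSubset (h : rels₁ ⊆ rels₂) : PresentedGroup rels₁ →* PresentedGroup rels₂ :=
  QuotientGroup.map _ _ (MonoidHom.id _) (Subgroup.normalClosure_mono h)

theorem homOfSubset_of (h : rels₁ ⊆ rels₂) (x : α) : homOfSubset h (of x) = of x :=
  rfl

end PresentedGroup

section Generators

variable {n : ℕ}

theorem QTrGen_yangBaxter {i j k : Fin n} (hij : i ≠ j) (hik : i ≠ k) (hjk : j ≠ k) :
    QTrGen i j hij * QTrGen i k hik * QTrGen j k hjk =
      QTrGen j k hjk * QTrGen i k hik * QTrGen i j hij := by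
  have := PresentedGroup.one_of_mem (rels := qtrRels n) (Or.inl ⟨i, j, k, hij, hik, hjk, rfl⟩)
  simp only [map_mul, map_inv, mul_inv_eq_one] at this
  exact this

theorem QTrGen_commute {i j k l : Fin n} (hij : i ≠ j) (hkl : k ≠ l)
    (hik : i ≠ k) (hil : i ≠ l) (hjk : j ≠ k) (hjl : j ≠ l) :
    Commute (QTrGen i j hij) (QTrGen k l hkl) := by
  have := PresentedGroup.one_of_mem (rels := qtrRels n)
    (Or.inr ⟨i, j, k, l, hij, hkl, hik, hil, hjk, hjl, rfl⟩)
  simp only [map_mul, map_inv, mul_inv_eq_one] at this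
  exact this

theorem TrGen_mul_TrGen_swap {i j : Fin n} (h : i ≠ j) :
    TrGen i j h * TrGen j i h.symm = 1 := by
  have := PresentedGroup.one_of_mem (rels := trRels n) (Or.inr ⟨i, j, h, rfl⟩)
  rw [map_mul] at this
  exact this

end Generators

section Oriented

variable {n : ℕ}

-- The value `1` on the diagonal makes `orientedGen_swap` hold without side conditions.
def orientedGen (i j : Fin n) : QTrGroup n :=
  if h : i < j then QTrGen i j h.ne else if h' : j < i then (QTrGen j i h'.ne)⁻¹ else 1

theorem orientedGen_of_lt {i j : Fin n} (h : i < j) : orientedGen i j = QTrGen i j h.ne :=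
  dif_pos h

theorem orientedGen_swap (i j : Fin n) : orientedGen j i = (orientedGen i j)⁻¹ := by
  rcases lt_trichotomy i j with h | rfl | h
  · rw [orientedGen, dif_neg h.not_gt, dif_pos h, orientedGen_of_lt h]
  · simp [orientedGen]
  · rw [orientedGen_of_lt h, orientedGen, dif_neg h.not_gt, dif_pos h, inv_inv]

theorem orientedGen_of_gt {i j : Fin n} (h : j < i) : orientedGen i j = (QTrGen j i h.ne)⁻¹ := by
  rw [orientedGen_swap, orientedGen_of_lt h]

theorem orientedGen_yangBaxter {i j k : Fin n} (hij : i ≠ j) (hik : i ≠ k) (hjk : j ≠ k) :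
    orientedGen i j * orientedGen i k * orientedGen j k =
      orientedGen j k * orientedGen i k * orientedGen i j := by
  refine distinct_triple_of_lt_of_swaps
    (P := fun a b c => orientedGen a b * orientedGen a c * orientedGen b c =
      orientedGen b c * orientedGen a c * orientedGen a b) ?_ ?_ ?_ hij hik hjk
  · intro a b c hab hbc
    simp only [orientedGen_of_lt hab, orientedGen_of_lt hbc, orientedGen_of_lt (hab.trans hbc)]
    exact QTrGen_yangBaxter _ _ _
  · intro a b c h
    simpa only [orientedGen_swap a b] using yangBaxter_swap₁₂ h
  · intro a b c h
    simpa only [orientedGen_swap b c] using yangBaxter_swap₂₃ h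

theorem orientedGen_commute {i j k l : Fin n} (hij : i ≠ j) (hkl : k ≠ l)
    (hik : i ≠ k) (hil : i ≠ l) (hjk : j ≠ k) (hjl : j ≠ l) :
    Commute (orientedGen i j) (orientedGen k l) := by
  wlog hkl' : k < l generalizing k l
  · simpa only [orientedGen_swap l k] using
      (this hkl.symm hil hik hjl hjk (hkl.lt_or_gt.resolve_left hkl')).inv_right
  wlog hij' : i < j generalizing i j
  · simpa only [orientedGen_swap j i] using
      (this hij.symm hjk hjl hik hil (hij.lt_or_gt.resolve_left hij')).inv_left
  rw [orientedGen_of_lt hij', orientedGen_of_lt hkl']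
  exact QTrGen_commute _ _ hik hil hjk hjl

end Oriented

section Retraction

variable {n : ℕ}

theorem lift_fgen {G : Type*} [Group G] (F : PairNe n → G) {i j : Fin n} (h : i ≠ j) :
    FreeGroup.lift F (fgen i j h) = F ⟨(i, j), h⟩ :=
  FreeGroup.lift_apply_of

theorem lift_orientedGen_eq_one :
    ∀ r ∈ trRels n, FreeGroup.lift (fun p : PairNe n => orientedGen p.1.1 p.1.2) r = 1 := by
  rintro r ((⟨i, j, k, hij, hik, hjk, rfl⟩ | ⟨i, j, k, l, hij, hkl, hik, hil, hjk, hjl, rfl⟩) |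
    ⟨i, j, hij, rfl⟩) <;>
    simp only [map_mul, map_inv, lift_fgen, mul_inv_eq_one]
  · exact orientedGen_yangBaxter hij hik hjk
  · exact orientedGen_commute hij hkl hik hil hjk hjl
  · rw [orientedGen_swap i j, mul_inv_cancel]

def trToQTr (n : ℕ) : TrGroup n →* QTrGroup n :=
  PresentedGroup.toGroup lift_orientedGen_eq_one

def qtrToTr (n : ℕ) : QTrGroup n →* TrGroup n :=
  PresentedGroup.homOfSubset Set.subset_union_left

theorem trToQTr_TrGen {i j : Fin n} (h : i ≠ j) : trToQTr n (TrGen i j h) = orientedGen i j :=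
  PresentedGroup.toGroup.of _

theorem qtrToTr_QTrGen {i j : Fin n} (h : i ≠ j) : qtrToTr n (QTrGen i j h) = TrGen i j h :=
  PresentedGroup.homOfSubset_of _ _

theorem qtrToTr_orientedGen {i j : Fin n} (h : i ≠ j) :
    qtrToTr n (orientedGen i j) = TrGen i j h := by
  rcases h.lt_or_gt with hlt | hgt
  · rw [orientedGen_of_lt hlt, qtrToTr_QTrGen]
  · rw [orientedGen_of_gt hgt, map_inv, qtrToTr_QTrGen, inv_eq_iff_mul_eq_one]
    exact TrGen_mul_TrGen_swap _

theorem qtrToTr_comp_trToQTr : (qtrToTr n).comp (trToQTr n) = MonoidHom.id (TrGroup n) :=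
  PresentedGroup.ext fun ⟨(i, j), h⟩ => by
    change qtrToTr n (trToQTr n (TrGen i j h)) = TrGen i j h
    rw [trToQTr_TrGen h, qtrToTr_orientedGen h]

end Retraction

/-- the homomorphism `f : Tr_n → QTr_n` with `R_{ij} ↦ R_{ij}` for `i < j`
(and `R_{ji} ↦ R_{ij}⁻¹`), composed with `g : QTr_n → Tr_n`, `R_{ij} ↦ R_{ij}`, is the
identity of `Tr_n`; i.e. `Tr_n` is a retract (split quotient) of `QTr_n`. -/
theorem stmt_8 (n : ℕ) :
    ∃ (f : TrGroup n →* QTrGroup n) (g : QTrGroup n →* TrGroup n),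
      (∀ (i j : Fin n) (h : i ≠ j), i < j → f (TrGen i j h) = QTrGen i j h) ∧
      (∀ (i j : Fin n) (h : i ≠ j), j < i → f (TrGen i j h) = (QTrGen j i h.symm)⁻¹) ∧
      (∀ (i j : Fin n) (h : i ≠ j), g (QTrGen i j h) = TrGen i j h) ∧
      g.comp f = MonoidHom.id (TrGroup n) := by
  refine ⟨trToQTr n, qtrToTr n, fun i j h hlt => ?_, fun i j h hgt => ?_,
    fun i j h => qtrToTr_QTrGen h, qtrToTr_comp_trToQTr⟩
  · rw [trToQTr_TrGen, orientedGen_of_lt hlt]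
  · rw [trToQTr_TrGen, orientedGen_of_gt hgt]
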